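/- Bridge transmission (single signal propagation along a Z-path): let Z ∈ {H,V}^k and let P be a Z-path with parameters (x, α, β). Let c be a configuration with c(P(0)) = 4, c(P(s)) = 3 for 1 ≤ s ≤ k, and c(y) ≤ 3 for every cell y not on P. Then for every 0 ≤ i ≤ k, the configuration obtained after applying updates Z(1),...,Z(i) satisfies: the cell P(i) has state 4, and every cell P(j) with j > i has state 3. -/

import Mathlib

/-!
The potential `h y = α (y₁ - x₁) + β (y₂ - x₂)` increases by exactly one along every step of
the Z-path, so `h (P s) = s`. Inductively, after `i` updates the only cell in state `4` on the
level set `{h ≥ i - 1}` is `P i`; the update `Z (i + 1)` acts along the line through `P i` in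
direction `P (i + 1) - P i`, so `P i` topples into `P (i + 1)` while every other cell of that
level set sees no toppling neighbour and stays below `4`.
-/

inductive Letter | H | V
deriving DecidableEq, BEq

/-- Horizontal neighborhood `N_h(x) = {x, x+(1,0), x-(1,0)}`. -/
def Nh (x : ℤ × ℤ) : Finset (ℤ × ℤ) := {x, x + (1, 0), x - (1, 0)}

/-- Vertical neighborhood `N_v(x) = {x, x+(0,1), x-(0,1)}`. -/
def Nv (x : ℤ × ℤ) : Finset (ℤ × ℤ) := {x, x + (0, 1), x - (0, 1)}

/-- The horizontal update of the fungal automaton. -/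
def upH (c : ℤ × ℤ → ℤ) (x : ℤ × ℤ) : ℤ :=
  c x - 2 * (if 4 ≤ c x then 1 else 0) + ∑ y ∈ Nh x, (if 4 ≤ c y then 1 else 0)

/-- The vertical update of the fungal automaton. -/
def upV (c : ℤ × ℤ → ℤ) (x : ℤ × ℤ) : ℤ :=
  c x - 2 * (if 4 ≤ c x then 1 else 0) + ∑ y ∈ Nv x, (if 4 ≤ c y then 1 else 0)

def Letter.step (L : Letter) (α β : ℤ) : ℤ × ℤ :=
  match L with
  | .H => (α, 0)
  | .V => (0, β)

def zpath (Z : ℕ → Letter) (x : ℤ × ℤ) (α β : ℤ) : ℕ → ℤ × ℤ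
  | 0 => x
  | s + 1 => zpath Z x α β s + (Z (s + 1)).step α β

def applyL (c : ℤ × ℤ → ℤ) (L : Letter) : ℤ × ℤ → ℤ :=
  match L with
  | .H => upH c
  | .V => upV c

/-- The configuration after applying the updates `Z(1), …, Z(i)` in order. -/
def runZ (Z : ℕ → Letter) (c : ℤ × ℤ → ℤ) : ℕ → ℤ × ℤ → ℤ
  | 0 => c
  | i + 1 => applyL (runZ Z c i) (Z (i + 1))

def topple (v : ℤ) : ℤ := if 4 ≤ v then 1 else 0

lemma topple_of_le_three {v : ℤ} (hv : v ≤ 3) : topple v = 0 := if_neg (by omega)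

lemma topple_four : topple 4 = 1 := rfl

def lineUpdate (c : ℤ × ℤ → ℤ) (d : ℤ × ℤ) (y : ℤ × ℤ) : ℤ :=
  c y - topple (c y) + topple (c (y + d)) + topple (c (y - d))

lemma sum_insert_add_sub {d : ℤ × ℤ} (hd : d ≠ 0) (y : ℤ × ℤ) (f : ℤ × ℤ → ℤ) :
    ∑ z ∈ {y, y + d, y - d}, f z = f y + f (y + d) + f (y - d) := by
  obtain ⟨d₁, d₂⟩ := d
  have hd' : d₁ ≠ 0 ∨ d₂ ≠ 0 := by
    by_contra! h0
    exact hd (by rw [h0.1, h0.2]; rfl)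
  rw [Finset.sum_insert, Finset.sum_pair, add_assoc] <;>
    simp only [Finset.mem_insert, Finset.mem_singleton, ne_eq, Prod.ext_iff, Prod.fst_add,
      Prod.snd_add, Prod.fst_sub, Prod.snd_sub] <;> omega

lemma Nh_eq {α : ℤ} (hα : α = 1 ∨ α = -1) (y : ℤ × ℤ) :
    Nh y = {y, y + (α, 0), y - (α, 0)} := by
  rcases hα with rfl | rfl
  · rfl
  · rw [Nh, Finset.pair_comm]
    congr 2

lemma Nv_eq {β : ℤ} (hβ : β = 1 ∨ β = -1) (y : ℤ × ℤ) :
    Nv y = {y, y + (0, β), y - (0, β)} := by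
  rcases hβ with rfl | rfl
  · rfl
  · rw [Nv, Finset.pair_comm]
    congr 2

lemma applyL_eq_lineUpdate {α β : ℤ} (hα : α = 1 ∨ α = -1) (hβ : β = 1 ∨ β = -1)
    (c : ℤ × ℤ → ℤ) (L : Letter) : applyL c L = lineUpdate c (L.step α β) := by
  have hα0 : α ≠ 0 := by omega
  have hβ0 : β ≠ 0 := by omega
  funext y
  cases L
  · rw [applyL, upH, Nh_eq hα, sum_insert_add_sub (by simp [hα0])]
    -- `Letter.step` must be unfolded before `topple`, or it survives inside `Decidable` instances.
    simp only [lineUpdate, Letter.step]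
    simp only [topple]
    ring
  · rw [applyL, upV, Nv_eq hβ, sum_insert_add_sub (by simp [hβ0])]
    simp only [lineUpdate, Letter.step]
    simp only [topple]
    ring

def height (x : ℤ × ℤ) (α β : ℤ) (y : ℤ × ℤ) : ℤ := α * (y.1 - x.1) + β * (y.2 - x.2)

lemma height_add_step {α β : ℤ} (hα : α = 1 ∨ α = -1) (hβ : β = 1 ∨ β = -1)
    (x : ℤ × ℤ) (L : Letter) (y : ℤ × ℤ) :
    height x α β (y + L.step α β) = height x α β y + 1 := by
  have hαα : α * α = 1 := by rcases hα with rfl | rfl <;> rfl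
  have hββ : β * β = 1 := by rcases hβ with rfl | rfl <;> rfl
  cases L <;> simp only [height, Letter.step, Prod.fst_add, Prod.snd_add]
  · linear_combination hαα
  · linear_combination hββ

lemma height_zpath {α β : ℤ} (hα : α = 1 ∨ α = -1) (hβ : β = 1 ∨ β = -1)
    (Z : ℕ → Letter) (x : ℤ × ℤ) (s : ℕ) : height x α β (zpath Z x α β s) = s := by
  induction s with
  | zero => simp [zpath, height]
  | succ s ih => rw [zpath, height_add_step hα hβ, ih]; push_cast; ring

/-- The bound `i - 1` is what the next update needs: it reads cells one potential level below
those it has to control. -/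
def IsSignalFront (k : ℕ) (P : ℕ → ℤ × ℤ) (h : ℤ × ℤ → ℤ) (c : ℤ × ℤ → ℤ) (i : ℕ) : Prop :=
  c (P i) = 4 ∧ (∀ j, i < j → j ≤ k → c (P j) = 3) ∧
    ∀ y, y ≠ P i → (i : ℤ) - 1 ≤ h y → c y ≤ 3

lemma isSignalFront_zero {k : ℕ} {P : ℕ → ℤ × ℤ} {c : ℤ × ℤ → ℤ} (h : ℤ × ℤ → ℤ)
    (hstart : c (P 0) = 4) (hpath : ∀ s, 1 ≤ s → s ≤ k → c (P s) = 3)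
    (hout : ∀ y : ℤ × ℤ, (∀ s ≤ k, y ≠ P s) → c y ≤ 3) : IsSignalFront k P h c 0 := by
  refine ⟨hstart, fun j hj hjk => hpath j hj hjk, fun y hy _ => ?_⟩
  by_cases hyP : ∀ s ≤ k, y ≠ P s
  · exact hout y hyP
  · push Not at hyP
    obtain ⟨s, hsk, rfl⟩ := hyP
    have hs : s ≠ 0 := by rintro rfl; exact hy rfl
    exact (hpath s (Nat.one_le_iff_ne_zero.2 hs) hsk).le

lemma IsSignalFront.lineUpdate_succ {k i : ℕ} {P : ℕ → ℤ × ℤ} {h : ℤ × ℤ → ℤ} {c : ℤ × ℤ → ℤ}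
    {d : ℤ × ℤ} (hd : ∀ y, h (y + d) = h y + 1) (hP : ∀ s, h (P s) = s)
    (hPi : P (i + 1) = P i + d) (hik : i + 1 ≤ k) (hc : IsSignalFront k P h c i) :
    IsSignalFront k P h (lineUpdate c d) (i + 1) := by
  obtain ⟨h4, h3, hlow⟩ := hc
  have hsub : ∀ y, h (y - d) = h y - 1 := fun y => by
    have := hd (y - d); rw [sub_add_cancel] at this; omega
  have quiet : ∀ y, y ≠ P i → (i : ℤ) - 1 ≤ h y → topple (c y) = 0 :=
    fun y hy hhy => topple_of_le_three (hlow y hy hhy)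
  have quiet' : ∀ y, h y ≠ i → (i : ℤ) - 1 ≤ h y → topple (c y) = 0 :=
    fun y hhy => quiet y fun hy => hhy (hy ▸ hP i)
  have hnext : c (P (i + 1)) = 3 := h3 (i + 1) (by omega) hik
  refine ⟨?_, fun j hj hjk => ?_, fun y hy hhy => ?_⟩
  · have hback : P (i + 1) - d = P i := by rw [hPi, add_sub_cancel_right]
    have hP1 := hP (i + 1)
    push_cast at hP1
    rw [lineUpdate, hnext, hback, h4, topple_four,
      quiet' _ (by rw [hd, hP1]; omega) (by rw [hd, hP1]; omega), topple_of_le_three le_rfl]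
    norm_num
  · have hPj := hP j
    rw [lineUpdate, h3 j (by omega) hjk, topple_of_le_three le_rfl,
      quiet' _ (by rw [hd, hPj]; omega) (by rw [hd, hPj]; omega),
      quiet' _ (by rw [hsub, hPj]; omega) (by rw [hsub, hPj]; omega)]
    norm_num
  · push_cast at hhy
    by_cases hyP : y = P i
    · subst hyP
      rw [lineUpdate, h4, topple_four, ← hPi, hnext, topple_of_le_three le_rfl,
        quiet' _ (by rw [hsub, hP]; omega) (by rw [hsub, hP])]
      norm_num
    · have hback : y - d ≠ P i := fun h' => hy (by rw [hPi, ← h', sub_add_cancel])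
      rw [lineUpdate, quiet y hyP (by omega), quiet' _ (by rw [hd]; omega) (by rw [hd]; omega),
        quiet _ hback (by rw [hsub]; omega)]
      linarith [hlow y hyP (by omega)]

theorem stmt10_general (k : ℕ) (Z : ℕ → Letter) (x : ℤ × ℤ) (α β : ℤ)
    (hα : α = 1 ∨ α = -1) (hβ : β = 1 ∨ β = -1)
    (P : ℕ → ℤ × ℤ) (hP : P = zpath Z x α β)
    (c : ℤ × ℤ → ℤ)
    (hstart : c (P 0) = 4)
    (hpath : ∀ s, 1 ≤ s → s ≤ k → c (P s) = 3)
    (hout : ∀ y : ℤ × ℤ, (∀ s ≤ k, y ≠ P s) → c y ≤ 3) :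
    ∀ i ≤ k, runZ Z c i (P i) = 4 ∧ ∀ j, i < j → j ≤ k → runZ Z c i (P j) = 3 := by
  have front : ∀ i ≤ k, IsSignalFront k P (height x α β) (runZ Z c i) i := by
    intro i
    induction i with
    | zero => exact fun _ => isSignalFront_zero _ hstart hpath hout
    | succ i ih =>
      intro hik
      rw [runZ, applyL_eq_lineUpdate hα hβ]
      subst hP
      exact (ih (by omega)).lineUpdate_succ (height_add_step hα hβ x _) (height_zpath hα hβ Z x)
        rfl hik
  exact fun i hi => ⟨(front i hi).1, (front i hi).2.1⟩

/-- Bridge transmission: a single signal propagates along a Z-path. -/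
theorem stmt10 (k : ℕ) (Z : ℕ → Letter) (x : ℤ × ℤ) (α β : ℤ)
    (hα : α = 1 ∨ α = -1) (hβ : β = 1 ∨ β = -1)
    (P : ℕ → ℤ × ℤ) (hP : P = zpath Z x α β)
    (c : ℤ × ℤ → ℤ) (hrange : ∀ y, 0 ≤ c y ∧ c y ≤ 5)
    (hstart : c (P 0) = 4)
    (hpath : ∀ s, 1 ≤ s → s ≤ k → c (P s) = 3)
    (hout : ∀ y : ℤ × ℤ, (∀ s ≤ k, y ≠ P s) → c y ≤ 3) :
    ∀ i ≤ k, runZ Z c i (P i) = 4 ∧ ∀ j, i < j → j ≤ k → runZ Z c i (P j) = 3 :=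
  stmt10_general k Z x α β hα hβ P hP c hstart hpath hout
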